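/- Measuring the number of nonzero registers splits a 'Rep' state correctly: let |φ⟩ ⊥ |0⟩ be unit vectors, b = b₁+b₂, and |Rep(b,c,φ)⟩ = C(b,c)^{−1/2} Σ_{S⊆[b],|S|=c} ⊗_i(𝟙[i∉S]|0⟩ − 𝟙[i∈S]|φ⟩). Then |Rep(b,c,φ)⟩ = Σ_{c₁=0}^{c} √(C(b₁,c₁)C(b₂,c−c₁)/C(b,c)) |Rep(b₁,c₁,φ)⟩ ⊗ |Rep(b₂,c−c₁,φ)⟩, and consequently applying to E_{c←Binomial(b,1/2)}[|Rep(b,c,φ)⟩⟨Rep(b,c,φ)|] the projective measurement counting nonzero positions among the first b₁ registers yields the state E_{c₁←Binomial(b₁,1/2), c₂←Binomial(b₂,1/2)}[|Rep(b₁,c₁,φ)⟩⟨Rep(b₁,c₁,φ)| ⊗ |Rep(b₂,c₂,φ)⟩⟨Rep(b₂,c₂,φ)|]. -/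

import Mathlib

open Finset

noncomputable section

/-- Sesquilinear inner product on `α → ℂ`. -/
def dotC {α : Type} [Fintype α] (u v : α → ℂ) : ℂ :=
  ∑ i, (starRingEnd ℂ) (u i) * v i

/-- Tensor product of the site vectors `v i`. -/
def tprodF {ι : Type} [Fintype ι] {d : ℕ} (v : ι → Fin d → ℂ) :
    (ι → Fin d) → ℂ :=
  fun f => ∏ i, v i (f i)

/-- Outer product `|u⟩⟨v|` realized as a kernel. -/
def outerF {α : Type} (u v : α → ℂ) : α × α → ℂ :=
  fun p => u p.1 * (starRingEnd ℂ) (v p.2)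

/-- `|Rep(b,c,φ)⟩ = C(b,c)^{-1/2} Σ_{S⊆[b],|S|=c} ⊗ᵢ(𝟙[i∉S]|0⟩ - 𝟙[i∈S]|φ⟩)`. -/
def repVec (b d : ℕ) (e0 φ : Fin d → ℂ) (c : ℕ) : (Fin b → Fin d) → ℂ :=
  ((Real.sqrt (b.choose c) : ℂ))⁻¹ •
    ∑ S ∈ powersetCard c (univ : Finset (Fin b)),
      tprodF (fun i => if i ∈ S then -φ else e0)

/-- `|Rep(b₁+b₂,c,φ)⟩` realized on the split register `Fin b₁ ⊕ Fin b₂`. -/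
def repVecSum (b₁ b₂ d : ℕ) (e0 φ : Fin d → ℂ) (c : ℕ) :
    ((Fin b₁ ⊕ Fin b₂) → Fin d) → ℂ :=
  ((Real.sqrt ((b₁ + b₂).choose c) : ℂ))⁻¹ •
    ∑ S ∈ powersetCard c (univ : Finset (Fin b₁ ⊕ Fin b₂)),
      tprodF (fun i => if i ∈ S then -φ else e0)

/-- Tensor product along the `Fin b₁ ⊕ Fin b₂` register decomposition. -/
def tensF {b₁ b₂ d : ℕ} (u : (Fin b₁ → Fin d) → ℂ) (w : (Fin b₂ → Fin d) → ℂ) :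
    ((Fin b₁ ⊕ Fin b₂) → Fin d) → ℂ :=
  fun v => u (fun i => v (Sum.inl i)) * w (fun i => v (Sum.inr i))

/-! A `c`-subset `S` of `Fin b₁ ⊕ Fin b₂` is the same as a pair of subsets `S.toLeft`,
`S.toRight` of sizes `c₁` and `c - c₁`, and the product state indexed by `S` is the tensor
product of the product states indexed by the two halves. So the unnormalised vector `repUnnorm` on
`b₁ + b₂` registers is `∑_{c₁} repUnnorm(b₁, c₁) ⊗ repUnnorm(b₂, c - c₁)`, and normalising each
factor produces the amplitudes `√(C(b₁,c₁) C(b₂,c-c₁) / C(b₁+b₂,c))`.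
For the mixture, the binomial weight `C(b₁+b₂,c) / 2^(b₁+b₂)` times the hypergeometric weight
`C(b₁,c₁) C(b₂,c-c₁) / C(b₁+b₂,c)` is the product of the two binomial weights, and
`(c, c₁) ↦ (c₁, c - c₁)` carries the triangle of summation onto the rectangle, outside of which
the binomial coefficients vanish. -/

section Tensor

variable {b₁ b₂ d : ℕ}

lemma tensF_smul_smul (a a' : ℂ) (u : (Fin b₁ → Fin d) → ℂ) (w : (Fin b₂ → Fin d) → ℂ) :
    tensF (a • u) (a' • w) = (a * a') • tensF u w := by
  funext v
  simp only [tensF, Pi.smul_apply, smul_eq_mul]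
  ring

lemma tensF_sum_sum {α β : Type*} (s : Finset α) (t : Finset β)
    (u : α → (Fin b₁ → Fin d) → ℂ) (w : β → (Fin b₂ → Fin d) → ℂ) :
    tensF (∑ x ∈ s, u x) (∑ y ∈ t, w y) = ∑ x ∈ s, ∑ y ∈ t, tensF (u x) (w y) := by
  funext v
  simp only [tensF, Finset.sum_apply, Finset.sum_mul_sum]

lemma tprodF_eq_tensF (g : Fin b₁ ⊕ Fin b₂ → Fin d → ℂ) :
    tprodF g = tensF (tprodF (g ∘ Sum.inl)) (tprodF (g ∘ Sum.inr)) := by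
  funext v
  simp only [tprodF, tensF, Fintype.prod_sum_type, Function.comp_apply]

end Tensor

lemma Finset.sum_powersetCard_disjSum {α β M : Type*} [AddCommMonoid M]
    (s : Finset α) (t : Finset β) (c : ℕ) (F : Finset α → Finset β → M) :
    ∑ S ∈ powersetCard c (s.disjSum t), F S.toLeft S.toRight
      = ∑ c₁ ∈ range (c + 1), ∑ S₁ ∈ powersetCard c₁ s,
          ∑ S₂ ∈ powersetCard (c - c₁) t, F S₁ S₂ := by
  simp_rw [← sum_product' (f := F), sum_sigma']
  refine sum_nbij' (fun S => ⟨#S.toLeft, (S.toLeft, S.toRight)⟩)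
    (fun p => p.2.1.disjSum p.2.2) ?_ ?_ ?_ ?_ (fun _ _ => rfl)
  · intro S hS
    simp only [mem_powersetCard, subset_disjSum] at hS
    have hcard := card_toLeft_add_card_toRight (u := S)
    simp only [mem_sigma, mem_range, mem_product, mem_powersetCard]
    exact ⟨by omega, ⟨hS.1.1, trivial⟩, hS.1.2, by omega⟩
  · rintro ⟨c₁, S₁, S₂⟩ hp
    simp only [mem_sigma, mem_range, mem_product, mem_powersetCard] at hp
    simp only [mem_powersetCard, card_disjSum]
    exact ⟨disjSum_mono hp.2.1.1 hp.2.2.1, by omega⟩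
  · intro S _
    exact toLeft_disjSum_toRight
  · rintro ⟨c₁, S₁, S₂⟩ hp
    simp only [mem_sigma, mem_range, mem_product, mem_powersetCard] at hp
    simp [hp.2.1.2]

lemma Finset.sum_range_sum_range_sub {M : Type*} [AddCommMonoid M] (m n : ℕ)
    (G : ℕ → ℕ → M) (hG₁ : ∀ x y, m < x → G x y = 0) (hG₂ : ∀ x y, n < y → G x y = 0) :
    ∑ c ∈ range (m + n + 1), ∑ c₁ ∈ range (c + 1), G c₁ (c - c₁)
      = ∑ x ∈ range (m + 1), ∑ y ∈ range (n + 1), G x y := by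
  have hmaps : ∀ p ∈ range (m + 1) ×ˢ range (n + 1), p.1 + p.2 ∈ range (m + n + 1) := by
    intro p hp
    simp only [mem_product, mem_range] at hp ⊢
    omega
  rw [← sum_product', ← sum_fiberwise_of_maps_to hmaps]
  refine sum_congr rfl fun c _ => ?_
  rw [← Nat.sum_antidiagonal_eq_sum_range_succ G]
  refine (sum_subset (fun p hp => ?_) fun p hpc hp => ?_).symm
  · exact HasAntidiagonal.mem_antidiagonal.2 (mem_filter.1 hp).2
  · rw [HasAntidiagonal.mem_antidiagonal] at hpc
    simp only [mem_filter, mem_product, mem_range, hpc, and_true, not_and_or, not_lt] at hp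
    rcases hp with h | h
    · exact hG₁ _ _ h
    · exact hG₂ _ _ h

section Rep

variable {d : ℕ} (e0 φ : Fin d → ℂ)

def repUnnorm (ι : Type) [Fintype ι] [DecidableEq ι] (c : ℕ) : (ι → Fin d) → ℂ :=
  ∑ S ∈ powersetCard c (univ : Finset ι), tprodF (fun i => if i ∈ S then -φ else e0)

-- Also true when `C(b,c) = 0`, where both sides are empty sums.
lemma sqrt_choose_smul_repVec (b c : ℕ) :
    (Real.sqrt (b.choose c) : ℂ) • repVec b d e0 φ c = repUnnorm e0 φ (Fin b) c := by
  rw [repVec, smul_smul]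
  rcases eq_or_ne (b.choose c) 0 with h | h
  · have hempty : powersetCard c (univ : Finset (Fin b)) = ∅ := by
      rw [← card_eq_zero, card_powersetCard, card_univ, Fintype.card_fin, h]
    simp [repUnnorm, hempty]
  · rw [mul_inv_cancel₀ (by exact_mod_cast (Real.sqrt_pos.2 (by positivity)).ne'), one_smul,
      repUnnorm]

lemma repUnnorm_sum_eq_sum_tensF (b₁ b₂ c : ℕ) :
    repUnnorm e0 φ (Fin b₁ ⊕ Fin b₂) c
      = ∑ c₁ ∈ range (c + 1),
          tensF (repUnnorm e0 φ (Fin b₁) c₁) (repUnnorm e0 φ (Fin b₂) (c - c₁)) := by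
  simp_rw [repUnnorm, tensF_sum_sum]
  rw [← univ_disjSum_univ, ← sum_powersetCard_disjSum]
  refine sum_congr rfl fun S _ => ?_
  rw [tprodF_eq_tensF]
  congr 2 <;> funext i <;> simp

lemma repVecSum_eq_sum_tensF (b₁ b₂ c : ℕ) :
    repVecSum b₁ b₂ d e0 φ c
      = ∑ c₁ ∈ range (c + 1),
          (Real.sqrt (((b₁.choose c₁ : ℝ) * (b₂.choose (c - c₁) : ℝ)) /
              ((b₁ + b₂).choose c : ℝ)) : ℂ) •
            tensF (repVec b₁ d e0 φ c₁) (repVec b₂ d e0 φ (c - c₁)) := by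
  change _ • repUnnorm e0 φ (Fin b₁ ⊕ Fin b₂) c = _
  rw [repUnnorm_sum_eq_sum_tensF, smul_sum]
  refine sum_congr rfl fun c₁ _ => ?_
  rw [← sqrt_choose_smul_repVec, ← sqrt_choose_smul_repVec, tensF_smul_smul, smul_smul,
    Real.sqrt_div' _ (Nat.cast_nonneg _), Real.sqrt_mul (Nat.cast_nonneg _)]
  congr 1
  push_cast
  ring

end Rep

lemma choose_div_two_pow_mul_hypergeometric {b₁ b₂ c : ℕ} (hc : c ≤ b₁ + b₂) (c₁ : ℕ) :
    (((b₁ + b₂).choose c : ℝ) / 2 ^ (b₁ + b₂)) *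
        (((b₁.choose c₁ : ℝ) * (b₂.choose (c - c₁) : ℝ)) / ((b₁ + b₂).choose c : ℝ))
      = ((b₁.choose c₁ : ℝ) / 2 ^ b₁) * ((b₂.choose (c - c₁) : ℝ) / 2 ^ b₂) := by
  have hC : ((b₁ + b₂).choose c : ℝ) ≠ 0 := by exact_mod_cast (Nat.choose_pos hc).ne'
  field_simp
  ring

theorem repVec_split_and_measure_general (b₁ b₂ d : ℕ) (e0 φ : Fin d → ℂ) :
    (∀ c : ℕ, c ≤ b₁ + b₂ →
      repVecSum b₁ b₂ d e0 φ c
        = ∑ c₁ ∈ range (c + 1),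
            (Real.sqrt (((b₁.choose c₁ : ℝ) * (b₂.choose (c - c₁) : ℝ)) /
                ((b₁ + b₂).choose c : ℝ)) : ℂ) •
              tensF (repVec b₁ d e0 φ c₁) (repVec b₂ d e0 φ (c - c₁))) ∧
    (∑ c ∈ range (b₁ + b₂ + 1), ∑ c₁ ∈ range (c + 1),
        ((((b₁ + b₂).choose c : ℝ) / 2 ^ (b₁ + b₂)) *
            (((b₁.choose c₁ : ℝ) * (b₂.choose (c - c₁) : ℝ)) /
              ((b₁ + b₂).choose c : ℝ))) •
          outerF (tensF (repVec b₁ d e0 φ c₁) (repVec b₂ d e0 φ (c - c₁)))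
            (tensF (repVec b₁ d e0 φ c₁) (repVec b₂ d e0 φ (c - c₁)))
      = ∑ c₁ ∈ range (b₁ + 1), ∑ c₂ ∈ range (b₂ + 1),
          (((b₁.choose c₁ : ℝ) / 2 ^ b₁) * ((b₂.choose c₂ : ℝ) / 2 ^ b₂)) •
            outerF (tensF (repVec b₁ d e0 φ c₁) (repVec b₂ d e0 φ c₂))
              (tensF (repVec b₁ d e0 φ c₁) (repVec b₂ d e0 φ c₂))) := by
  refine ⟨fun c _ => repVecSum_eq_sum_tensF e0 φ b₁ b₂ c, ?_⟩
  let ρ (x y : ℕ) := outerF (tensF (repVec b₁ d e0 φ x) (repVec b₂ d e0 φ y))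
    (tensF (repVec b₁ d e0 φ x) (repVec b₂ d e0 φ y))
  calc _ = ∑ c ∈ range (b₁ + b₂ + 1), ∑ c₁ ∈ range (c + 1),
        (((b₁.choose c₁ : ℝ) / 2 ^ b₁) * ((b₂.choose (c - c₁) : ℝ) / 2 ^ b₂)) • ρ c₁ (c - c₁) :=
        sum_congr rfl fun c hc => sum_congr rfl fun c₁ _ => by
          rw [choose_div_two_pow_mul_hypergeometric (Nat.lt_succ_iff.1 (mem_range.1 hc))]
    _ = _ := sum_range_sum_range_sub b₁ b₂
        (fun x y => (((b₁.choose x : ℝ) / 2 ^ b₁) * ((b₂.choose y : ℝ) / 2 ^ b₂)) • ρ x y)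
        (fun x y hx => by simp [Nat.choose_eq_zero_of_lt hx])
        (fun x y hy => by simp [Nat.choose_eq_zero_of_lt hy])

/-- Counting nonzero registers splits a `Rep` state correctly:
`|Rep(b₁+b₂,c,φ)⟩ = Σ_{c₁} √(C(b₁,c₁)C(b₂,c-c₁)/C(b₁+b₂,c))
  |Rep(b₁,c₁,φ)⟩⊗|Rep(b₂,c-c₁,φ)⟩`, and consequently measuring the number of
nonzero positions among the first `b₁` registers of
`E_{c←Bin(b₁+b₂,1/2)}[|Rep(b₁+b₂,c,φ)⟩⟨…|]` yields
`E_{c₁←Bin(b₁,1/2), c₂←Bin(b₂,1/2)}[|Rep(b₁,c₁,φ)⟩⟨…| ⊗ |Rep(b₂,c₂,φ)⟩⟨…|]`. -/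
theorem repVec_split_and_measure (b₁ b₂ d : ℕ) (e0 φ : Fin d → ℂ)
    (h00 : dotC e0 e0 = 1) (hφφ : dotC φ φ = 1) (h0φ : dotC e0 φ = 0) :
    (∀ c : ℕ, c ≤ b₁ + b₂ →
      repVecSum b₁ b₂ d e0 φ c
        = ∑ c₁ ∈ range (c + 1),
            (Real.sqrt (((b₁.choose c₁ : ℝ) * (b₂.choose (c - c₁) : ℝ)) /
                ((b₁ + b₂).choose c : ℝ)) : ℂ) •
              tensF (repVec b₁ d e0 φ c₁) (repVec b₂ d e0 φ (c - c₁))) ∧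
    (∑ c ∈ range (b₁ + b₂ + 1), ∑ c₁ ∈ range (c + 1),
        ((((b₁ + b₂).choose c : ℝ) / 2 ^ (b₁ + b₂)) *
            (((b₁.choose c₁ : ℝ) * (b₂.choose (c - c₁) : ℝ)) /
              ((b₁ + b₂).choose c : ℝ))) •
          outerF (tensF (repVec b₁ d e0 φ c₁) (repVec b₂ d e0 φ (c - c₁)))
            (tensF (repVec b₁ d e0 φ c₁) (repVec b₂ d e0 φ (c - c₁)))
      = ∑ c₁ ∈ range (b₁ + 1), ∑ c₂ ∈ range (b₂ + 1),
          (((b₁.choose c₁ : ℝ) / 2 ^ b₁) * ((b₂.choose c₂ : ℝ) / 2 ^ b₂)) •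
            outerF (tensF (repVec b₁ d e0 φ c₁) (repVec b₂ d e0 φ c₂))
              (tensF (repVec b₁ d e0 φ c₁) (repVec b₂ d e0 φ c₂))) :=
  repVec_split_and_measure_general b₁ b₂ d e0 φ

end
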